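/- ζ(3) = (4/7)(π G − ∫₀^{π/2} x ln(csc(x) + cot(x)) dx), where G is Catalan's constant. -/

import Mathlib

/-!
On `(0, π)` the function `F x = log (csc x + cot x) = log (cot (x / 2))` has the Fourier series
`2 ∑ cos ((2k+1) x) / (2k+1)`. The derivative of the partial sum `S_N` telescopes against
`F' = -csc`, so that `F x - S_N x = ∫_x^{π/2} cos (2Nt) / sin t dt`, and one integration by parts
bounds this by `1 / (N sin x)`. By Jordan's inequality `x S_N x → x F x` uniformly on `(0, π/2]`,
and integrating `x cos ((2k+1) x)` termwise over `[0, π/2]` gives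
`∫ x F = π G - 2 ∑ 1/(2k+1)³ = π G - (7/4) ζ(3)`.
-/

open Real

noncomputable def catalanG : ℝ := ∑' n : ℕ, (-1 : ℝ) ^ n / (2 * (n : ℝ) + 1) ^ 2

open MeasureTheory Filter Topology Finset

lemma cos_odd_mul_pi_div_two (k : ℕ) : cos ((2 * k + 1) * (π / 2)) = 0 := by
  rw [show (2 * (k : ℝ) + 1) * (π / 2) = π / 2 + k * π by ring, cos_add_nat_mul_pi,
    cos_pi_div_two, mul_zero]

lemma sin_odd_mul_pi_div_two (k : ℕ) : sin ((2 * k + 1) * (π / 2)) = (-1) ^ k := by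
  rw [show (2 * (k : ℝ) + 1) * (π / 2) = π / 2 + k * π by ring, sin_add_nat_mul_pi,
    sin_pi_div_two, mul_one]

lemma sum_sin_odd_mul_mul_sin (N : ℕ) (t : ℝ) :
    (∑ k ∈ range N, 2 * sin ((2 * k + 1) * t)) * sin t = 1 - cos (2 * N * t) := by
  have htelescope (k : ℕ) :
      2 * sin ((2 * k + 1) * t) * sin t = cos (2 * k * t) - cos (2 * (k + 1 : ℕ) * t) := by
    rw [cos_sub_cos]
    push_cast
    ring_nf
    rw [sin_neg]
    ring
  rw [sum_mul, sum_congr rfl fun k _ => htelescope k, sum_range_sub', Nat.cast_zero, mul_zero,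
    zero_mul, cos_zero]

noncomputable def logCscAddCot (x : ℝ) : ℝ := log (1 / sin x + cot x)

noncomputable def oddCosPartialSum (N : ℕ) (x : ℝ) : ℝ :=
  ∑ k ∈ range N, 2 * cos ((2 * k + 1) * x) / (2 * k + 1)

lemma logCscAddCot_eq_log_sub_log {x : ℝ} (hx : 0 < sin x) :
    logCscAddCot x = log (1 + cos x) - log (sin x) := by
  have h : 0 < 1 + cos x := by nlinarith [sin_sq_add_cos_sq x, neg_one_le_cos x]
  rw [logCscAddCot, cot_eq_cos_div_sin, ← add_div, log_div h.ne' hx.ne']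

lemma hasDerivAt_logCscAddCot {t : ℝ} (ht : 0 < sin t) :
    HasDerivAt logCscAddCot (-1 / sin t) t := by
  have h : 0 < 1 + cos t := by nlinarith [sin_sq_add_cos_sq t, neg_one_le_cos t]
  have hderiv := (((hasDerivAt_cos t).const_add 1).log h.ne').sub ((hasDerivAt_sin t).log ht.ne')
  have hval : -sin t / (1 + cos t) - cos t / sin t = -1 / sin t := by
    field_simp
    linear_combination -sin_sq_add_cos_sq t
  rw [hval] at hderiv
  refine hderiv.congr_of_eventuallyEq ?_
  filter_upwards [(isOpen_lt continuous_const continuous_sin).mem_nhds ht] with x hx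
  exact logCscAddCot_eq_log_sub_log hx

lemma hasDerivAt_oddCosPartialSum (N : ℕ) (t : ℝ) :
    HasDerivAt (oddCosPartialSum N) (-∑ k ∈ range N, 2 * sin ((2 * k + 1) * t)) t := by
  rw [← sum_neg_distrib]
  refine HasDerivAt.fun_sum fun k _ => ?_
  have hk : (2 * k + 1 : ℝ) ≠ 0 := by positivity
  refine ((((hasDerivAt_id t).const_mul (2 * k + 1 : ℝ)).cos).const_mul 2).div_const
    (2 * k + 1 : ℝ) |>.congr_deriv ?_
  field_simp
  simp

lemma logCscAddCot_pi_div_two : logCscAddCot (π / 2) = 0 := by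
  simp [logCscAddCot, cot_eq_cos_div_sin]

lemma oddCosPartialSum_pi_div_two (N : ℕ) : oddCosPartialSum N (π / 2) = 0 :=
  sum_eq_zero fun k _ => by rw [cos_odd_mul_pi_div_two, mul_zero, zero_div]

lemma sin_pos_and_cos_nonneg_of_mem_uIcc {a b t : ℝ} (ha : 0 < a) (hab : a ≤ b)
    (hb : b ≤ π / 2) (ht : t ∈ Set.uIcc a b) : 0 < sin t ∧ 0 ≤ cos t := by
  rw [Set.uIcc_of_le hab] at ht
  exact ⟨sin_pos_of_pos_of_lt_pi (ha.trans_le ht.1) (ht.2.trans_lt (by linarith [pi_pos])),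
    cos_nonneg_of_mem_Icc ⟨by linarith [pi_pos, ht.1], ht.2.trans hb⟩⟩

lemma logCscAddCot_sub_oddCosPartialSum (N : ℕ) {x : ℝ} (hx₀ : 0 < x) (hx : x ≤ π / 2) :
    logCscAddCot x - oddCosPartialSum N x = ∫ t in x..π / 2, cos (2 * N * t) / sin t := by
  have hsin t (ht : t ∈ Set.uIcc x (π / 2)) : 0 < sin t :=
    (sin_pos_and_cos_nonneg_of_mem_uIcc hx₀ hx le_rfl ht).1
  have hderiv : ∀ t ∈ Set.uIcc x (π / 2), HasDerivAt
      (fun t => oddCosPartialSum N t - logCscAddCot t) (cos (2 * N * t) / sin t) t := by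
    intro t ht
    refine ((hasDerivAt_oddCosPartialSum N t).fun_sub
      (hasDerivAt_logCscAddCot (hsin t ht))).congr_deriv ?_
    have hsum := sum_sin_odd_mul_mul_sin N t
    -- keeps `field_simp` from normalizing the two occurrences of `cos (2 * N * t)` differently
    generalize cos (2 * N * t) = c at hsum ⊢
    field_simp [(hsin t ht).ne']
    linear_combination -hsum
  have hint : IntervalIntegrable (fun t => cos (2 * N * t) / sin t) volume x (π / 2) :=
    (ContinuousOn.div (by fun_prop) continuous_sin.continuousOn
      fun t ht => (hsin t ht).ne').intervalIntegrable
  rw [intervalIntegral.integral_eq_sub_of_hasDerivAt hderiv hint, logCscAddCot_pi_div_two,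
    oddCosPartialSum_pi_div_two]
  ring

lemma integral_cos_div_sin_sq {a b : ℝ} (ha : 0 < a) (hab : a ≤ b) (hb : b < π) :
    ∫ t in a..b, cos t / sin t ^ 2 = (sin a)⁻¹ - (sin b)⁻¹ := by
  have hsin : ∀ t ∈ Set.uIcc a b, sin t ≠ 0 := fun t ht => by
    rw [Set.uIcc_of_le hab] at ht
    exact (sin_pos_of_pos_of_lt_pi (ha.trans_le ht.1) (ht.2.trans_lt hb)).ne'
  have hderiv : ∀ t ∈ Set.uIcc a b, HasDerivAt (fun t => -(sin t)⁻¹) (cos t / sin t ^ 2) t :=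
    fun t ht => ((hasDerivAt_sin t).inv (hsin t ht)).neg.congr_deriv (by ring)
  rw [intervalIntegral.integral_eq_sub_of_hasDerivAt hderiv
    (continuous_cos.continuousOn.div (by fun_prop) fun t ht =>
      pow_ne_zero 2 (hsin t ht)).intervalIntegrable]
  ring

lemma abs_integral_cos_div_sin_sq_mul_sin_le {a b c : ℝ} (hc : 0 < c) (ha : 0 < a) (hab : a ≤ b)
    (hb : b ≤ π / 2) :
    |∫ t in a..b, -cos t / sin t ^ 2 * (sin (c * t) / c)| ≤ ((sin a)⁻¹ - (sin b)⁻¹) / c := by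
  have hsin_cos t (ht : t ∈ Set.uIcc a b) := sin_pos_and_cos_nonneg_of_mem_uIcc ha hab hb ht
  have hsin2 t (ht : t ∈ Set.uIcc a b) : sin t ^ 2 ≠ 0 := (pow_pos (hsin_cos t ht).1 2).ne'
  have hcont : ContinuousOn (fun t => cos t / sin t ^ 2) (Set.uIcc a b) :=
    continuous_cos.continuousOn.div (by fun_prop) hsin2
  rw [← integral_cos_div_sin_sq ha hab (by linarith [pi_pos]), ← intervalIntegral.integral_div]
  refine (intervalIntegral.abs_integral_le_integral_abs hab).trans
    (intervalIntegral.integral_mono_on hab ?_ (hcont.div_const c).intervalIntegrable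
      fun t ht => ?_)
  · exact ((continuous_cos.neg.continuousOn.div (by fun_prop) hsin2).mul
      (by fun_prop : Continuous fun t => sin (c * t) / c).continuousOn).intervalIntegrable.abs
  · obtain ⟨hsin, hcos⟩ := hsin_cos t (Set.Icc_subset_uIcc ht)
    rw [abs_mul, abs_div, abs_div, abs_neg, abs_of_nonneg hcos, abs_of_pos (by positivity),
      abs_of_pos hc, div_eq_mul_one_div (cos t / sin t ^ 2) c]
    gcongr
    exact abs_sin_le_one _

lemma abs_integral_cos_mul_div_sin_le {a b c : ℝ} (hc : 0 < c) (ha : 0 < a) (hab : a ≤ b)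
    (hb : b ≤ π / 2) : |∫ t in a..b, cos (c * t) / sin t| ≤ 2 / (c * sin a) := by
  have hsin t (ht : t ∈ Set.uIcc a b) := (sin_pos_and_cos_nonneg_of_mem_uIcc ha hab hb ht).1
  -- integrate by parts against `v = sin (c t) / c`, whose size is at most `1 / c`
  have hparts := intervalIntegral.integral_mul_deriv_eq_deriv_mul
    (u := fun t => (sin t)⁻¹) (v := fun t => sin (c * t) / c)
    (u' := fun t => -cos t / sin t ^ 2) (v' := fun t => cos (c * t))
    (fun t ht => (hasDerivAt_sin t).inv (hsin t ht).ne')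
    (fun t _ => ((((hasDerivAt_id t).const_mul c).sin).div_const c).congr_deriv
      (by field_simp; simp))
    (continuous_cos.neg.continuousOn.div (by fun_prop) fun t ht =>
      (pow_pos (hsin t ht) 2).ne').intervalIntegrable
    ((by fun_prop : Continuous fun t => cos (c * t)).intervalIntegrable _ _)
  have hend (x : ℝ) (hx : 0 < sin x) : |(sin x)⁻¹ * (sin (c * x) / c)| ≤ (sin x)⁻¹ / c := by
    rw [abs_mul, abs_div, abs_inv, abs_of_pos hx, abs_of_pos hc, mul_div_assoc']
    gcongr
    exact mul_le_of_le_one_right (by positivity) (abs_sin_le_one _)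
  have hinv : ∫ t in a..b, cos (c * t) / sin t = ∫ t in a..b, (sin t)⁻¹ * cos (c * t) := by
    simp_rw [div_eq_inv_mul]
  rw [hinv, hparts]
  calc _ ≤ (sin b)⁻¹ / c + (sin a)⁻¹ / c + ((sin a)⁻¹ - (sin b)⁻¹) / c := by
        refine (abs_sub _ _).trans (add_le_add ((abs_sub _ _).trans ?_)
          (abs_integral_cos_div_sin_sq_mul_sin_le hc ha hab hb))
        exact add_le_add (hend b (hsin b Set.right_mem_uIcc)) (hend a (hsin a Set.left_mem_uIcc))
    _ = 2 / (c * sin a) := by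
        have := (hsin a Set.left_mem_uIcc).ne'
        field_simp
        ring

lemma abs_mul_logCscAddCot_sub_le {N : ℕ} (hN : 0 < N) {x : ℝ} (hx₀ : 0 < x) (hx : x ≤ π / 2) :
    |x * logCscAddCot x - x * oddCosPartialSum N x| ≤ π / (2 * N) := by
  have hNpos : (0 : ℝ) < N := Nat.cast_pos.mpr hN
  have hjordan : 2 / π * x ≤ sin x := mul_le_sin hx₀.le hx
  rw [← mul_sub, logCscAddCot_sub_oddCosPartialSum N hx₀ hx, abs_mul, abs_of_pos hx₀]
  calc x * |∫ t in x..π / 2, cos (2 * N * t) / sin t|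
      ≤ x * (2 / (2 * N * sin x)) := by
        gcongr
        exact abs_integral_cos_mul_div_sin_le (by positivity) hx₀ hx le_rfl
    _ ≤ x * (2 / (2 * N * (2 / π * x))) := by gcongr
    _ = π / (2 * N) := by field_simp

lemma intervalIntegrable_mul_logCscAddCot :
    IntervalIntegrable (fun x => x * logCscAddCot x) volume 0 (π / 2) := by
  have hpi : (0 : ℝ) ≤ π / 2 := by positivity
  rw [intervalIntegrable_iff_integrableOn_Ioc_of_le hpi]
  have hmeas : Measurable logCscAddCot := by
    unfold logCscAddCot
    simp_rw [cot_eq_cos_div_sin]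
    fun_prop
  refine Measure.integrableOn_of_bounded (M := π / 2 + π) measure_Ioc_lt_top.ne
    (measurable_id.mul hmeas).aestronglyMeasurable ?_
  rw [ae_restrict_iff' measurableSet_Ioc]
  refine ae_of_all _ fun x ⟨hx₀, hx⟩ => ?_
  have hfirst : |x * oddCosPartialSum 1 x| ≤ π := by
    rw [oddCosPartialSum, sum_range_one, abs_mul, abs_of_pos hx₀]
    simp only [Nat.cast_zero, mul_zero, zero_add, one_mul, div_one, abs_mul, abs_two]
    nlinarith [abs_cos_le_one x]
  have hclose := abs_mul_logCscAddCot_sub_le one_pos hx₀ hx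
  rw [Nat.cast_one, mul_one] at hclose
  rw [Real.norm_eq_abs]
  linarith [abs_sub_abs_le_abs_sub (x * logCscAddCot x) (x * oddCosPartialSum 1 x)]

lemma tendsto_integral_mul_oddCosPartialSum :
    Tendsto (fun N : ℕ => ∫ x in 0..π / 2, x * oddCosPartialSum N x) atTop
      (𝓝 (∫ x in 0..π / 2, x * logCscAddCot x)) := by
  rw [tendsto_iff_norm_sub_tendsto_zero]
  refine squeeze_zero_norm' (a := fun N : ℕ => π ^ 2 / 4 * (1 / N)) ?_ ?_
  · filter_upwards [eventually_gt_atTop 0] with N hN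
    have hcont : Continuous fun x => x * oddCosPartialSum N x := by
      unfold oddCosPartialSum; fun_prop
    rw [norm_norm, ← intervalIntegral.integral_sub (hcont.intervalIntegrable _ _)
      intervalIntegrable_mul_logCscAddCot]
    refine (intervalIntegral.norm_integral_le_of_norm_le_const (C := π / (2 * N))
      fun x hx => ?_).trans_eq ?_
    · rw [Set.uIoc_of_le (by positivity)] at hx
      rw [Real.norm_eq_abs, abs_sub_comm]
      exact abs_mul_logCscAddCot_sub_le hN hx.1 hx.2
    · rw [sub_zero, abs_of_pos (by positivity)]
      field_simp
      ring
  · rw [← mul_zero (π ^ 2 / 4)]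
    exact tendsto_one_div_atTop_nhds_zero_nat.const_mul _

lemma integral_mul_cos_mul {a : ℝ} (ha : a ≠ 0) (b : ℝ) :
    ∫ x in 0..b, x * cos (a * x) = b * sin (a * b) / a + (cos (a * b) - 1) / a ^ 2 := by
  have hderiv (x : ℝ) : HasDerivAt (fun x => x * sin (a * x) / a + cos (a * x) / a ^ 2)
      (x * cos (a * x)) x := by
    have hax := (hasDerivAt_id x).const_mul a
    refine (((hasDerivAt_id x).mul hax.sin).div_const a |>.add
      (hax.cos.div_const (a ^ 2))).congr_deriv ?_
    field_simp
    simp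
  rw [intervalIntegral.integral_eq_sub_of_hasDerivAt (fun x _ => hderiv x)
    ((by fun_prop : Continuous fun x => x * cos (a * x)).intervalIntegrable _ _)]
  simp only [mul_zero, sin_zero, cos_zero, zero_div, zero_add]
  ring

lemma integral_mul_oddCosPartialSum (N : ℕ) :
    ∫ x in 0..π / 2, x * oddCosPartialSum N x =
      π * ∑ k ∈ range N, (-1) ^ k / (2 * k + 1 : ℝ) ^ 2
        - 2 * ∑ k ∈ range N, 1 / (2 * k + 1 : ℝ) ^ 3 := by
  simp_rw [oddCosPartialSum, mul_sum]
  rw [intervalIntegral.integral_finsetSum fun k _ => by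
    apply Continuous.intervalIntegrable; fun_prop]
  rw [← sum_sub_distrib]
  refine sum_congr rfl fun k _ => ?_
  have hk : (2 * k + 1 : ℝ) ≠ 0 := by positivity
  have hterm : ∀ x : ℝ, x * (2 * cos ((2 * k + 1) * x) / (2 * k + 1))
      = 2 / (2 * k + 1) * (x * cos ((2 * k + 1) * x)) := fun x => by ring
  simp_rw [hterm]
  rw [intervalIntegral.integral_const_mul, integral_mul_cos_mul hk, sin_odd_mul_pi_div_two,
    cos_odd_mul_pi_div_two]
  field_simp
  ring

lemma summable_one_div_odd_pow {p : ℕ} (hp : 1 < p) :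
    Summable fun k : ℕ => 1 / (2 * k + 1 : ℝ) ^ p := by
  have hodd : Function.Injective fun k : ℕ => 2 * k + 1 := fun m n h => by simpa using h
  simpa [Function.comp_def] using (summable_one_div_nat_pow.mpr hp).comp_injective hodd

lemma hasSum_catalanG : HasSum (fun n : ℕ => (-1 : ℝ) ^ n / (2 * n + 1) ^ 2) catalanG :=
  (Summable.of_norm (by simpa using summable_one_div_odd_pow one_lt_two)).hasSum

lemma hasSum_one_div_odd_pow {p : ℕ} (hp : 1 < p) :
    HasSum (fun k : ℕ => 1 / (2 * k + 1 : ℝ) ^ p)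
      ((1 - 1 / 2 ^ p) * ∑' n : ℕ, 1 / ((n : ℝ) + 1) ^ p) := by
  set Z := ∑' n : ℕ, 1 / ((n : ℝ) + 1) ^ p
  obtain ⟨O, hO⟩ := summable_one_div_odd_pow hp
  have hZ : HasSum (fun n : ℕ => 1 / ((n : ℝ) + 1) ^ p) Z := by
    refine Summable.hasSum ?_
    simpa using (summable_nat_add_iff 1).mpr (summable_one_div_nat_pow.mpr hp)
  -- the even-indexed terms are the odd reciprocals, the odd-indexed ones are `2⁻ᵖ` times `Z`
  have hsplit : HasSum (fun n : ℕ => 1 / ((n : ℝ) + 1) ^ p) (O + 1 / 2 ^ p * Z) := by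
    refine HasSum.even_add_odd (hO.congr_fun fun k => by push_cast; rfl)
      ((hZ.mul_left (1 / 2 ^ p)).congr_fun fun k => ?_)
    push_cast
    rw [show (2 * k + 1 + 1 : ℝ) = 2 * (k + 1) by ring, mul_pow]
    field_simp
  rwa [show O = (1 - 1 / 2 ^ p) * Z by linarith [hZ.unique hsplit]] at hO

theorem zeta3_catalan_integral :
    (∑' n : ℕ, 1 / ((n : ℝ) + 1) ^ 3) =
      (4 / 7) * (π * catalanG -
        ∫ x in (0 : ℝ)..(π / 2), x * Real.log (1 / Real.sin x + Real.cot x)) := by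
  have hpartial : Tendsto (fun N => ∫ x in 0..π / 2, x * oddCosPartialSum N x) atTop
      (𝓝 (π * catalanG - 2 * ((1 - 1 / 2 ^ 3) * ∑' n : ℕ, 1 / ((n : ℝ) + 1) ^ 3))) := by
    simp_rw [integral_mul_oddCosPartialSum]
    exact (hasSum_catalanG.tendsto_sum_nat.const_mul π).sub
      ((hasSum_one_div_odd_pow (by norm_num)).tendsto_sum_nat.const_mul 2)
  have hlimit := tendsto_nhds_unique hpartial tendsto_integral_mul_oddCosPartialSum
  simp only [logCscAddCot] at hlimit
  linarith
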